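/- Laufer's rationality criterion: a connected negative definite plumbing graph G is rational (χ_can(l) > 0 for all effective nonzero l ∈ L) if and only if for one (equivalently any) computation sequence z_0 = E_j, z_{n+1} = z_n + E_{j(n)} with (z_n, E_{j(n)}) > 0 terminating at Artin's fundamental cycle z_min, one has (z_n, E_{j(n)}) = 1 at every step. -/

import Mathlib

/-!
Along a computation sequence `χ(z_{n+1}) = χ(z_n) + 1 - (z_n, E_{j(n)})`, so
`χ(z_min) = 1 - ∑ ((z_n, E_{j(n)}) - 1)` with nonnegative summands: all steps equal `1` iff
`χ(z_min) = 1`, which rationality forces. Conversely, let `χ(z_min) = 1`. By connectedness `z_min`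
has full support, so any `l > 0` lies below the anti-nef cycle `N z_min`, and Laufer's algorithm
climbs from `l` to an anti-nef `x` with `χ(x) ≤ χ(l)`. Finally every nonzero anti-nef `x` has
`χ(x) ≥ 1`, by induction on `x`.
-/

open Classical

noncomputable section

def castQ {s : ℕ} (x : Fin s → ℤ) : Fin s → ℚ := fun i => (x i : ℚ)

def pairQ {s : ℕ} (B : Matrix (Fin s) (Fin s) ℤ) (x y : Fin s → ℚ) : ℚ :=
  ∑ i, ∑ j, x i * (B i j : ℚ) * y j

def pairZ {s : ℕ} (B : Matrix (Fin s) (Fin s) ℤ) (x y : Fin s → ℤ) : ℤ :=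
  ∑ i, ∑ j, x i * B i j * y j

def pq {s : ℕ} (B : Matrix (Fin s) (Fin s) ℤ) (v : Fin s → ℚ) (j : Fin s) : ℚ :=
  ∑ i, v i * (B i j : ℚ)

def chi {s : ℕ} (B : Matrix (Fin s) (Fin s) ℤ) (k : Fin s → ℚ) (l : Fin s → ℤ) : ℚ :=
  -(pairQ B (castQ l) (castQ l + k)) / 2

def NegDef {s : ℕ} (B : Matrix (Fin s) (Fin s) ℤ) : Prop :=
  ∀ x : Fin s → ℚ, x ≠ 0 → pairQ B x x < 0

def plumbGraph {s : ℕ} (B : Matrix (Fin s) (Fin s) ℤ) : SimpleGraph (Fin s) :=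
  SimpleGraph.fromRel (fun i j => 0 < B i j)

def Plumbing {s : ℕ} (B : Matrix (Fin s) (Fin s) ℤ) : Prop :=
  B.IsSymm ∧ NegDef B ∧ (∀ i j, i ≠ j → B i j = 0 ∨ B i j = 1) ∧
    (plumbGraph B).Connected ∧ (plumbGraph B).IsAcyclic

def IsCanonical {s : ℕ} (B : Matrix (Fin s) (Fin s) ℤ) (k : Fin s → ℚ) : Prop :=
  ∀ j, pq B k j = -(B j j : ℚ) - 2

def RationalMat {s : ℕ} (B : Matrix (Fin s) (Fin s) ℤ) : Prop :=
  ∀ kc : Fin s → ℚ, IsCanonical B kc →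
    ∀ l : Fin s → ℤ, (∀ t, 0 ≤ l t) → l ≠ 0 → 0 < chi B kc l

def HasBadSet {s : ℕ} (B : Matrix (Fin s) (Fin s) ℤ) (Jb : Finset (Fin s)) : Prop :=
  ∃ B' : Matrix (Fin s) (Fin s) ℤ, (∀ i j, i ≠ j → B' i j = B i j) ∧
    (∀ j, j ∉ Jb → B' j j = B j j) ∧ (∀ j ∈ Jb, B' j j ≤ B j j) ∧ RationalMat B'

def MinClassRep {s : ℕ} (B : Matrix (Fin s) (Fin s) ℤ) (l' : Fin s → ℚ) : Prop :=
  (∀ i, 0 ≤ l' i) ∧ (∀ j, pq B l' j ≤ 0) ∧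
    ∀ y : Fin s → ℤ, (∀ j, pq B (l' + castQ y) j ≤ 0) → ∀ i, 0 ≤ y i

def IsXcycle {s : ℕ} (B : Matrix (Fin s) (Fin s) ℤ) (l' : Fin s → ℚ) (Jb : Finset (Fin s))
    (i : Fin s → ℕ) (x : Fin s → ℤ) : Prop :=
  (∀ j ∈ Jb, x j = i j) ∧ (∀ j, j ∉ Jb → pq B (l' + castQ x) j ≤ 0) ∧
    ∀ y : Fin s → ℤ, (∀ j ∈ Jb, y j = i j) → (∀ j, j ∉ Jb → pq B (l' + castQ y) j ≤ 0) →
      ∀ t, x t ≤ y t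

def krep {s : ℕ} (kcan l' : Fin s → ℚ) : Fin s → ℚ := fun j => kcan j + 2 * l' j

open Matrix

variable {s : ℕ} {B : Matrix (Fin s) (Fin s) ℤ} {k : Fin s → ℚ}

def IsAntinef (B : Matrix (Fin s) (Fin s) ℤ) (l : Fin s → ℤ) : Prop :=
  ∀ j, (l ᵥ* B) j ≤ 0

lemma castQ_add (x y : Fin s → ℤ) : castQ (x + y) = castQ x + castQ y := by
  funext i; simp [castQ]

lemma pq_castQ (l : Fin s → ℤ) (j : Fin s) : pq B (castQ l) j = ((l ᵥ* B) j : ℚ) := by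
  simp [pq, castQ, vecMul, dotProduct]

lemma pairQ_add_left (x y z : Fin s → ℚ) :
    pairQ B (x + y) z = pairQ B x z + pairQ B y z := by
  simp [pairQ, add_mul, Finset.sum_add_distrib]

lemma pairQ_add_right (x y z : Fin s → ℚ) :
    pairQ B x (y + z) = pairQ B x y + pairQ B x z := by
  simp [pairQ, mul_add, Finset.sum_add_distrib]

lemma pairQ_comm (hsym : B.IsSymm) (x y : Fin s → ℚ) : pairQ B x y = pairQ B y x := by
  rw [pairQ, Finset.sum_comm]
  refine Finset.sum_congr rfl fun j _ => Finset.sum_congr rfl fun i _ => ?_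
  rw [hsym.apply i j]; ring

lemma pairQ_castQ (x y : Fin s → ℤ) : pairQ B (castQ x) (castQ y) = pairZ B x y := by
  simp [pairQ, pairZ, castQ]

lemma pairZ_single_one (l : Fin s → ℤ) (j : Fin s) :
    pairZ B l (Pi.single j 1) = (l ᵥ* B) j := by
  simp [pairZ, vecMul, dotProduct, Pi.single_apply]

lemma pairZ_eq_dotProduct (x y : Fin s → ℤ) : pairZ B x y = (x ᵥ* B) ⬝ᵥ y := by
  simp only [pairZ, vecMul, dotProduct, Finset.sum_mul]
  exact Finset.sum_comm

lemma chi_zero : chi B k 0 = 0 := by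
  simp [chi, pairQ, castQ]

lemma chi_add (hsym : B.IsSymm) (a b : Fin s → ℤ) :
    chi B k (a + b) = chi B k a + chi B k b - pairZ B a b := by
  simp only [chi, castQ_add, pairQ_add_left, pairQ_add_right, ← pairQ_castQ,
    pairQ_comm hsym (castQ b) (castQ a)]
  ring

lemma chi_single_one (hsym : B.IsSymm) (hk : IsCanonical B k) (j : Fin s) :
    chi B k (Pi.single j 1) = 1 := by
  have hE : castQ (Pi.single j 1 : Fin s → ℤ) = Pi.single j 1 := by
    funext i; simp [castQ, Pi.single_apply]
  have hEE : pairQ B (Pi.single j 1) (Pi.single j 1) = B j j := by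
    simp [pairQ, Pi.single_apply]
  have hEk : pairQ B (Pi.single j 1) k = pq B k j := by
    rw [pairQ_comm hsym]; simp [pairQ, pq, Pi.single_apply]
  rw [chi, hE, pairQ_add_right, hEE, hEk, hk j]
  ring

lemma chi_add_single_one (hsym : B.IsSymm) (hk : IsCanonical B k) (l : Fin s → ℤ) (j : Fin s) :
    chi B k (l + Pi.single j 1) = chi B k l + 1 - (l ᵥ* B) j := by
  rw [chi_add hsym, chi_single_one hsym hk, pairZ_single_one]

lemma vecMul_apply_le_of_le (hoff : ∀ i j, i ≠ j → 0 ≤ B i j) {l c : Fin s → ℤ} {j : Fin s}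
    (hlc : l ≤ c) (hj : l j = c j) : (l ᵥ* B) j ≤ (c ᵥ* B) j := by
  simp only [vecMul, dotProduct]
  refine Finset.sum_le_sum fun i _ => ?_
  rcases eq_or_ne i j with rfl | hij
  · rw [hj]
  · exact mul_le_mul_of_nonneg_right (hlc i) (hoff i j hij)

/-- Laufer's algorithm: adding `E_j` where `(l, E_j) > 0` does not increase `χ`, and keeps `l ≤ c`
because `c` is anti-nef. -/
theorem exists_antinef_chi_le (hsym : B.IsSymm) (hoff : ∀ i j, i ≠ j → 0 ≤ B i j)
    (hk : IsCanonical B k) {l c : Fin s → ℤ} (hlc : l ≤ c) (hc : IsAntinef B c) :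
    ∃ x, l ≤ x ∧ x ≤ c ∧ IsAntinef B x ∧ chi B k x ≤ chi B k l := by
  by_cases hl : IsAntinef B l
  · exact ⟨l, le_rfl, hlc, hl, le_rfl⟩
  obtain ⟨j, hj⟩ : ∃ j, 0 < (l ᵥ* B) j := by simpa [IsAntinef] using hl
  have hjc : l j < c j := (hlc j).lt_of_ne fun h =>
    (hj.trans_le (vecMul_apply_le_of_le hoff hlc h)).not_ge (hc j)
  have hstep : l ≤ l + Pi.single j 1 :=
    le_add_of_nonneg_right (Pi.single_nonneg.2 zero_le_one : (0 : Fin s → ℤ) ≤ Pi.single j 1)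
  have hlc' : l + Pi.single j 1 ≤ c := fun t => by
    rcases eq_or_ne t j with rfl | htj
    · simpa using hjc
    · simpa [htj] using hlc t
  obtain ⟨x, hlx, hxc, hx, hχ⟩ := exists_antinef_chi_le hsym hoff hk hlc' hc
  refine ⟨x, hstep.trans hlx, hxc, hx, ?_⟩
  rw [chi_add_single_one hsym hk] at hχ
  have : (1 : ℚ) ≤ (l ᵥ* B) j := by exact_mod_cast hj
  linarith
termination_by (∑ t, (c t - l t)).toNat
decreasing_by
  have hsum : ∑ t, (c t - (l + Pi.single j 1 : Fin s → ℤ) t) = ∑ t, (c t - l t) - 1 := by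
    simp [Finset.sum_sub_distrib, Finset.sum_add_distrib]
    ring
  have hpos : c j - l j ≤ ∑ t, (c t - l t) :=
    Finset.single_le_sum (f := fun t => c t - l t) (fun t _ => sub_nonneg.2 (hlc t))
      (Finset.mem_univ j)
  omega

lemma pos_of_antinef (hsym : B.IsSymm) (hoff : ∀ i j, i ≠ j → 0 ≤ B i j)
    (hconn : (plumbGraph B).Connected) {z : Fin s → ℤ} (hz0 : 0 ≤ z) (hz : z ≠ 0)
    (hanti : IsAntinef B z) (t : Fin s) : 0 < z t := by
  obtain ⟨a, ha⟩ := Function.ne_iff.mp hz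
  by_contra ht
  obtain ⟨d, -, hd, hd'⟩ := ((hconn.preconnected a t).some).exists_boundary_dart
    {i | 0 < z i} ((hz0 a).lt_of_ne' ha) ht
  have hzv : z d.snd = 0 := le_antisymm (not_lt.1 hd') (hz0 _)
  obtain ⟨-, hB⟩ := (SimpleGraph.fromRel_adj _ _ _).1 d.adj
  have hBuv : 0 < B d.fst d.snd := hB.elim id fun h => hsym.apply d.fst d.snd ▸ h
  -- `z` vanishes at `d.snd` but not at its neighbour `d.fst`, so `(z, E_{d.snd}) > 0`.
  have hpos : 0 < (z ᵥ* B) d.snd := by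
    refine Finset.sum_pos' (fun i _ => ?_) ⟨d.fst, Finset.mem_univ _, mul_pos hd hBuv⟩
    rcases eq_or_ne i d.snd with rfl | hi
    · simp [hzv]
    · exact mul_nonneg (hz0 i) (hoff i _ hi)
  exact (hanti _).not_gt hpos

structure IsFundamentalCycle (B : Matrix (Fin s) (Fin s) ℤ) (zmin : Fin s → ℤ) : Prop where
  nonneg : 0 ≤ zmin
  ne_zero : zmin ≠ 0
  antinef : IsAntinef B zmin
  le : ∀ x, 0 ≤ x → x ≠ 0 → IsAntinef B x → zmin ≤ x

namespace IsFundamentalCycle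

variable {zmin : Fin s → ℤ}

/-- Writing `x = z_min + u`, the climb from `u` below `x` produces a smaller anti-nef cycle `y`
with `χ(y) ≤ χ(u) ≤ χ(x) - 1`. -/
theorem one_le_chi_of_antinef (hz : IsFundamentalCycle B zmin) (hsym : B.IsSymm)
    (hoff : ∀ i j, i ≠ j → 0 ≤ B i j) (hk : IsCanonical B k) (hchi : chi B k zmin = 1)
    {x : Fin s → ℤ} (hx0 : 0 ≤ x) (hx : x ≠ 0) (hanti : IsAntinef B x) : 1 ≤ chi B k x := by
  set u := x - zmin
  have hu0 : 0 ≤ u := sub_nonneg.2 (hz.le x hx0 hx hanti)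
  have hpair : (pairZ B zmin u : ℚ) ≤ 0 := by
    rw [pairZ_eq_dotProduct]
    exact_mod_cast Finset.sum_nonpos fun j _ =>
      mul_nonpos_of_nonpos_of_nonneg (hz.antinef j) (hu0 j)
  have hχx : chi B k x = 1 + chi B k u - pairZ B zmin u := by
    rw [← hchi, ← chi_add hsym, add_sub_cancel]
  rcases eq_or_ne u 0 with hu | hu
  · rw [hχx, hu, chi_zero]
    simp [pairZ]
  obtain ⟨y, huy, hyx, hy, hχy⟩ :=
    exists_antinef_chi_le hsym hoff hk (sub_le_self x hz.nonneg) hanti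
  have hy0 : 0 ≤ y := hu0.trans huy
  have hyx' : y < x := hyx.lt_of_ne fun h => by
    subst h
    linarith
  have hyne : y ≠ 0 := fun h => hu (le_antisymm (h ▸ huy) hu0)
  have := hz.one_le_chi_of_antinef hsym hoff hk hchi hy0 hyne hy
  linarith
termination_by (∑ t, x t).toNat
decreasing_by
  have : ∑ t, y t < ∑ t, x t := Fintype.sum_strictMono hyx'
  have := Fintype.sum_nonneg hy0
  omega

theorem one_le_chi (hz : IsFundamentalCycle B zmin) (hsym : B.IsSymm)
    (hoff : ∀ i j, i ≠ j → 0 ≤ B i j) (hconn : (plumbGraph B).Connected) (hk : IsCanonical B k)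
    (hchi : chi B k zmin = 1) {l : Fin s → ℤ} (hl0 : 0 ≤ l) (hl : l ≠ 0) : 1 ≤ chi B k l := by
  set N := ∑ t, l t
  have hN : 0 ≤ N := Fintype.sum_nonneg hl0
  have hlc : l ≤ N • zmin := fun t => calc
    l t ≤ N := Finset.single_le_sum (fun i _ => hl0 i) (Finset.mem_univ t)
    _ ≤ N * zmin t :=
      le_mul_of_one_le_right hN (pos_of_antinef hsym hoff hconn hz.nonneg hz.ne_zero hz.antinef t)
  have hc : IsAntinef B (N • zmin) := fun j => by
    rw [smul_vecMul]
    exact smul_nonpos_of_nonneg_of_nonpos hN (hz.antinef j)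
  obtain ⟨x, hlx, -, hx, hχ⟩ := exists_antinef_chi_le hsym hoff hk hlc hc
  have hxne : x ≠ 0 := fun h => hl (le_antisymm (h ▸ hlx) hl0)
  exact (hz.one_le_chi_of_antinef hsym hoff hk hchi (hl0.trans hlx) hxne hx).trans hχ

end IsFundamentalCycle

theorem chi_computation_sequence (hsym : B.IsSymm) (hk : IsCanonical B k)
    {z : ℕ → Fin s → ℤ} {jseq : ℕ → Fin s} {j0 : Fin s} (hz0 : z 0 = Pi.single j0 1) {n : ℕ}
    (hstep : ∀ m < n, z (m + 1) = z m + Pi.single (jseq m) 1) :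
    chi B k (z n) = 1 - ∑ m ∈ Finset.range n, (pairZ B (z m) (Pi.single (jseq m) 1) - 1 : ℤ) := by
  induction n with
  | zero => simp [hz0, chi_single_one hsym hk]
  | succ n ih =>
    rw [hstep n n.lt_succ_self, chi_add_single_one hsym hk, ih fun m hm => hstep m (by omega),
      Finset.sum_range_succ, pairZ_single_one]
    push_cast
    ring

/-- Laufer's criterion of rationality. -/
theorem stmt7 (s : ℕ) (B : Matrix (Fin s) (Fin s) ℤ) (hB : Plumbing B)
    (kcan : Fin s → ℚ) (hk : IsCanonical B kcan)
    (zmin : Fin s → ℤ)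
    (hzmin : (∀ t, 0 ≤ zmin t) ∧ zmin ≠ 0 ∧ (∀ j, pq B (castQ zmin) j ≤ 0) ∧
      ∀ z : Fin s → ℤ, (∀ t, 0 ≤ z t) → z ≠ 0 → (∀ j, pq B (castQ z) j ≤ 0) →
        ∀ t, zmin t ≤ z t)
    (j0 : Fin s) (z : ℕ → Fin s → ℤ) (jseq : ℕ → Fin s) (T : ℕ)
    (hz0 : z 0 = Pi.single j0 1)
    (hstep : ∀ n < T, 0 < pairZ B (z n) (Pi.single (jseq n) 1) ∧
      z (n + 1) = z n + Pi.single (jseq n) 1)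
    (hzT : z T = zmin) :
    (∀ l : Fin s → ℤ, (∀ t, 0 ≤ l t) → l ≠ 0 → 0 < chi B kcan l) ↔
      (∀ n < T, pairZ B (z n) (Pi.single (jseq n) 1) = 1) := by
  obtain ⟨hsym, -, hoff01, hconn, -⟩ := hB
  have hoff : ∀ i j, i ≠ j → 0 ≤ B i j := fun i j hij =>
    (hoff01 i j hij).elim (fun h => h.ge) fun h => h ▸ zero_le_one
  have hantinef (l : Fin s → ℤ) : IsAntinef B l ↔ ∀ j, pq B (castQ l) j ≤ 0 := by
    simp only [IsAntinef, pq_castQ, Int.cast_nonpos]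
  have hfund : IsFundamentalCycle B zmin := ⟨hzmin.1, hzmin.2.1, (hantinef _).2 hzmin.2.2.1,
    fun x hx0 hx hxa => hzmin.2.2.2 x hx0 hx ((hantinef x).1 hxa)⟩
  set d : ℕ → ℤ := fun n => pairZ B (z n) (Pi.single (jseq n) 1) - 1
  have hd : ∀ n ∈ Finset.range T, 0 ≤ d n := fun n hn =>
    sub_nonneg.2 (hstep n (Finset.mem_range.1 hn)).1
  have hχ : chi B kcan zmin = 1 - ∑ n ∈ Finset.range T, d n :=
    hzT ▸ chi_computation_sequence hsym hk hz0 fun n hn => (hstep n hn).2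
  have hsteps : (∀ n < T, pairZ B (z n) (Pi.single (jseq n) 1) = 1) ↔
      ∑ n ∈ Finset.range T, d n = 0 := by
    rw [Finset.sum_eq_zero_iff_of_nonneg hd]
    simp only [Finset.mem_range, d, sub_eq_zero]
  rw [hsteps]
  constructor
  · intro hrat
    have hlt : ((∑ n ∈ Finset.range T, d n : ℤ) : ℚ) < 1 := by
      linarith [hχ ▸ hrat zmin hfund.nonneg hfund.ne_zero]
    have : ∑ n ∈ Finset.range T, d n < 1 := by exact_mod_cast hlt
    have := Finset.sum_nonneg hd
    omega
  · intro hsum l hl0 hl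
    exact one_pos.trans_le (hfund.one_le_chi hsym hoff hconn hk (by simp [hχ, hsum]) hl0 hl)
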